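/- arXiv:2404.00746 — 3 statements merged into one kernel-verified Lean document; each statement's English description precedes it below -/
import Mathlib

section
/- Let S be an uncertain sequence all of whose existential probabilities lie in the interval [0,1], and let α and α' be patterns such that α is a sublist (subsequence) of α'. Then maxPr_S(α') ≤ maxPr_S(α). That is, the maximum occurrence probability maxPr_S is anti-monotone with respect to the subsequence relation on patterns. -/
variable {I : Type*}

/-- An uncertain sequence: a finite list of (item, existential probability) pairs. -/
abbrev USeq (I : Type*) := List (I × ℝ)

/-- An uncertain database: a finite list of uncertain sequences. -/
abbrev UDB (I : Type*) := List (USeq I)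

/-- `α` occurs in `S`: some sublist of `S` has item list `α`. -/
def Occurs (α : List I) (S : USeq I) : Prop :=
  ∃ o : USeq I, o.Sublist S ∧ o.map Prod.fst = α

/-- Maximum occurrence probability of pattern `α` in `S`
(`0` if `α` has no occurrence in `S`; `1` for the empty pattern). -/
noncomputable def maxPrS [DecidableEq I] (α : List I) (S : USeq I) : ℝ :=
  (((S.sublists.filter fun o => decide (o.map Prod.fst = α)).map
      fun o => (o.map Prod.snd).prod).maximum).unbotD 0

/-- Greedy projection: `projSeq α S = some S'` iff `α` occurs in `S`, in which case `S'`
is the suffix of `S` strictly after the last matched position of the greedy (leftmost)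
occurrence of `α` in `S`.  For the empty pattern it is `S` itself. -/
def projSeq [DecidableEq I] : List I → USeq I → Option (USeq I)
  | [], S => some S
  | _ :: _, [] => none
  | i :: α, (x, _) :: rest =>
      if x = i then projSeq α rest else projSeq (i :: α) rest

/-- The projected database `DB|α`. -/
def projDB [DecidableEq I] (α : List I) (DB : UDB I) : UDB I :=
  DB.filterMap (projSeq α)

/-- `P̂_D(i)`: maximum probability of an entry with item `i` over all sequences of `D`
(`0` if `i` occurs in no sequence of `D`). -/
noncomputable def Phat [DecidableEq I] (D : UDB I) (i : I) : ℝ :=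
  (((D.flatten.filter fun e => decide (e.1 = i)).map Prod.snd).maximum).unbotD 0

/-- `maxPr(α)` relative to `DB`: the product of per-step maximum probabilities over the
successively projected databases. -/
noncomputable def maxPrDB [DecidableEq I] (DB : UDB I) (α : List I) : ℝ :=
  ∏ k : Fin α.length, Phat (projDB (α.take k.val) DB) (α.get k)

/-- Expected support of `α` in `DB`. -/
noncomputable def expSup [DecidableEq I] (DB : UDB I) (α : List I) : ℝ :=
  (DB.map fun S => maxPrS α S).sum

/-- `expSup^cap` of a nonempty pattern (junk value `0` on the empty pattern). -/
noncomputable def expSupCap [DecidableEq I] (DB : UDB I) (α : List I) : ℝ :=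
  match α.getLast? with
  | none => 0
  | some i =>
      maxPrDB DB α.dropLast *
        ((projDB α.dropLast DB).map fun S' => maxPrS [i] S').sum

/-- Number of sequences of `D` in which item `i` occurs. -/
def supCount [DecidableEq I] (D : UDB I) (i : I) : ℕ :=
  (D.filter fun S => decide (i ∈ S.map Prod.fst)).length

/-- `expSupport^top` of a nonempty pattern (junk value `0` on the empty pattern). -/
noncomputable def expSupTop [DecidableEq I] (DB : UDB I) (α : List I) : ℝ :=
  match α.getLast? with
  | none => 0
  | some i =>
      maxPrDB DB α.dropLast * Phat (projDB α.dropLast DB) i *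
        (supCount (projDB α.dropLast DB) i : ℝ)

/-- Item `i` occurs in some sequence of `D`. -/
def ItemOccursIn (D : UDB I) (i : I) : Prop :=
  ∃ S ∈ D, i ∈ S.map Prod.fst

/-- `sWeight`: average weight of the items of a pattern. -/
noncomputable def sWeight (w : I → ℝ) (α : List I) : ℝ :=
  (α.map w).sum / (α.length : ℝ)

/-- Maximum weight among the items of a pattern (`0` for the empty pattern). -/
noncomputable def mxWs (w : I → ℝ) (α : List I) : ℝ :=
  ((α.map w).maximum).unbotD 0

/-- Maximum weight among items occurring in some sequence of `D` (`0` if none). -/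
noncomputable def mxWDB (w : I → ℝ) (D : UDB I) : ℝ :=
  ((D.flatten.map fun e => w e.1).maximum).unbotD 0

/-- `wgt^cap`. -/
noncomputable def wgtCap [DecidableEq I] (DB : UDB I) (w : I → ℝ) (α : List I) : ℝ :=
  max (mxWDB w (projDB α.dropLast DB)) (mxWs w α)

/-- Weighted expected support. -/
noncomputable def WES [DecidableEq I] (DB : UDB I) (w : I → ℝ) (α : List I) : ℝ :=
  expSup DB α * sWeight w α

/-- `wExpSup^cap`. -/
noncomputable def wExpSupCap [DecidableEq I] (DB : UDB I) (w : I → ℝ) (α : List I) : ℝ :=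
  expSupCap DB α * wgtCap DB w α

/-! Restricting an occurrence of `α'` along the embedding `α <+ α'` yields an occurrence of `α`
made of fewer entries; as every probability lies in `[0,1]`, dropping entries can only increase
the product. -/

theorem List.Sublist.prod_le_prod_of_mem_Icc {R : Type*} [CommSemiring R] [PartialOrder R]
    [IsOrderedRing R] {l₁ l₂ : List R} (h : l₁.Sublist l₂)
    (hl₂ : ∀ a ∈ l₂, a ∈ Set.Icc (0 : R) 1) :
    l₂.prod ≤ l₁.prod := by
  induction h with
  | slnil => rfl
  | cons a _ ih =>
    simp only [List.prod_cons, List.forall_mem_cons] at hl₂ ⊢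
    have hnonneg : (0 : R) ≤ _ := List.prod_nonneg fun b hb => (hl₂.2 b hb).1
    exact (mul_le_of_le_one_left hnonneg hl₂.1.2).trans (ih hl₂.2)
  | cons_cons a _ ih =>
    simp only [List.prod_cons, List.forall_mem_cons] at hl₂ ⊢
    exact mul_le_mul_of_nonneg_left (ih hl₂.2) hl₂.1.1

section
variable [DecidableEq I] {S o : USeq I} {α : List I}

theorem le_maxPrS (ho : o.Sublist S) : (o.map Prod.snd).prod ≤ maxPrS (o.map Prod.fst) S :=
  WithBot.le_unbotD <| List.le_maximum_of_mem' <|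
    List.mem_map_of_mem <| List.mem_filter.2 ⟨List.mem_sublists.2 ho, by simp⟩

theorem maxPrS_le {c : ℝ} (hc : 0 ≤ c)
    (h : ∀ o : USeq I, o.Sublist S → o.map Prod.fst = α → (o.map Prod.snd).prod ≤ c) :
    maxPrS α S ≤ c := by
  rw [maxPrS, WithBot.unbotD_le_iff fun _ => hc]
  refine List.maximum_le_of_forall_le fun p hp => ?_
  simp only [List.mem_map, List.mem_filter, List.mem_sublists, decide_eq_true_eq] at hp
  obtain ⟨o, ⟨ho, hoα⟩, rfl⟩ := hp
  exact WithBot.coe_le_coe.2 (h o ho hoα)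

theorem maxPrS_nonneg (hS : ∀ e ∈ S, 0 ≤ e.2) : 0 ≤ maxPrS α S := by
  by_cases hα : Occurs α S
  · obtain ⟨o, ho, rfl⟩ := hα
    exact (List.prod_nonneg <| List.forall_mem_map.2 fun e he => hS e (ho.subset he)).trans
      (le_maxPrS ho)
  · have hnone : S.sublists.filter (fun o => decide (o.map Prod.fst = α)) = [] :=
      List.filter_eq_nil_iff.2 fun o ho => by
        simpa using fun hoα => hα ⟨o, List.mem_sublists.1 ho, hoα⟩
    simp [maxPrS, hnone]
end

/-- If all probabilities of `S` lie in `[0,1]` and `α` is a sublist (subsequence) of `α'`,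
then `maxPr_S(α') ≤ maxPr_S(α)`: `maxPr_S` is anti-monotone w.r.t. the subsequence
relation on patterns. -/
theorem maxPrS_anti_of_sublist [DecidableEq I]
    (S : USeq I) (hp : ∀ e ∈ S, e.2 ∈ Set.Icc (0 : ℝ) 1)
    (α α' : List I) (h : α.Sublist α') :
    maxPrS α' S ≤ maxPrS α S := by
  refine maxPrS_le (maxPrS_nonneg fun e he => (hp e he).1) fun o' ho' ho'α' => ?_
  obtain ⟨o, hoo', rfl⟩ := List.sublist_map_iff.1 (ho'α' ▸ h)
  have hprob : ∀ p ∈ o'.map Prod.snd, p ∈ Set.Icc (0 : ℝ) 1 :=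
    List.forall_mem_map.2 fun e he => hp e (ho'.subset he)
  calc (o'.map Prod.snd).prod ≤ (o.map Prod.snd).prod :=
        (hoo'.map Prod.snd).prod_le_prod_of_mem_Icc hprob
    _ ≤ maxPrS (o.map Prod.fst) S := le_maxPrS (hoo'.trans ho')
end

section
/- Let DB be an uncertain database and let α, β be patterns. Then every item that occurs in some sequence of the projected database DB|(α ++ β) also occurs in some sequence of DB|α; consequently P̂_{DB|(α ++ β)}(i) ≤ P̂_{DB|α}(i) for every item i (when all probabilities are nonnegative), and mxW_DB(DB|(α ++ β)) ≤ mxW_DB(DB|α) (when all item weights lie in [0,1]). -/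
variable {I : Type*}

/-!
Greedy projection composes, `DB|(α ++ β) = (DB|α)|β`, and every projected sequence is a
suffix of the sequence it comes from. Hence each entry of a sequence of `DB|(α ++ β)` is an
entry of a sequence of `DB|α`. Both `P̂` and `mxW_DB` are maxima over such entries (with
default `0`), so they can only shrink, provided the default `0` lies below all candidates.
-/

theorem List.maximum_unbotD_le_of_subset {α : Type*} [LinearOrder α] {L M : List α} {d : α}
    (h : L ⊆ M) (hM : ∀ x ∈ M, d ≤ x) : L.maximum.unbotD d ≤ M.maximum.unbotD d := by
  rcases eq_or_ne L [] with rfl | hL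
  · rcases hMax : M.maximum with _ | m
    · rfl
    · exact hM m (List.maximum_mem hMax)
  · exact WithBot.unbotD_mono (List.maximum_ne_bot_of_ne_nil hL) (List.maximum_mono h)

section Projection

variable [DecidableEq I]

theorem projSeq_append (α β : List I) (S : USeq I) :
    projSeq (α ++ β) S = (projSeq α S).bind (projSeq β) := by
  induction α, S using projSeq.induct with
  | case1 S => simp [projSeq]
  | case2 i α => rfl
  | case3 α x p rest ih => simpa [projSeq] using ih
  | case4 i α x p rest hx ih => simpa [projSeq, hx] using ih

theorem projSeq_isSuffix {α : List I} {S T : USeq I} (h : projSeq α S = some T) : T <:+ S := by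
  induction α, S using projSeq.induct with
  | case1 S =>
    rw [projSeq, Option.some.injEq] at h
    exact h ▸ List.suffix_refl S
  | case2 i α => cases h
  | case3 α x p rest ih =>
    rw [projSeq, if_pos rfl] at h
    exact (ih h).trans (List.suffix_cons _ rest)
  | case4 i α x p rest hx ih =>
    rw [projSeq, if_neg hx] at h
    exact (ih h).trans (List.suffix_cons _ rest)

theorem projDB_append (α β : List I) (DB : UDB I) :
    projDB (α ++ β) DB = projDB β (projDB α DB) := by
  simp only [projDB, List.filterMap_filterMap, projSeq_append]

theorem flatten_projDB_subset (α : List I) (DB : UDB I) :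
    (projDB α DB).flatten ⊆ DB.flatten := by
  intro e he
  obtain ⟨T, hT, heT⟩ := List.mem_flatten.mp he
  obtain ⟨S, hS, hST⟩ := List.mem_filterMap.mp hT
  exact List.mem_flatten.mpr ⟨S, hS, (projSeq_isSuffix hST).subset heT⟩

theorem Phat_le_of_flatten_subset {D D' : UDB I} (h : D'.flatten ⊆ D.flatten)
    (hD : ∀ e ∈ D.flatten, 0 ≤ e.2) (i : I) : Phat D' i ≤ Phat D i :=
  List.maximum_unbotD_le_of_subset (List.map_subset _ (List.filter_subset _ h))
    (List.forall_mem_map.mpr fun e he => hD e (List.mem_filter.mp he).1)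

end Projection

theorem ItemOccursIn.of_flatten_subset {D D' : UDB I} (h : D'.flatten ⊆ D.flatten) {i : I}
    (hi : ItemOccursIn D' i) : ItemOccursIn D i := by
  obtain ⟨T, hT, hiT⟩ := hi
  obtain ⟨e, heT, rfl⟩ := List.mem_map.mp hiT
  obtain ⟨S, hS, heS⟩ := List.mem_flatten.mp (h (List.mem_flatten.mpr ⟨T, hT, heT⟩))
  exact ⟨S, hS, List.mem_map_of_mem heS⟩

theorem mxWDB_le_of_flatten_subset {D D' : UDB I} (h : D'.flatten ⊆ D.flatten) {w : I → ℝ}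
    (hw : ∀ x, 0 ≤ w x) : mxWDB w D' ≤ mxWDB w D :=
  List.maximum_unbotD_le_of_subset (List.map_subset _ h)
    (List.forall_mem_map.mpr fun e _ => hw e.1)

/-- Every item occurring in some sequence of `DB|(α ++ β)` also occurs in some sequence
of `DB|α`; consequently `P̂` (for nonnegative probabilities) and `mxW_DB` (for weights in
`[0,1]`) do not increase when the projecting pattern is extended. -/
theorem projDB_append_items_and_bounds [DecidableEq I]
    (DB : UDB I) (α β : List I) :
    (∀ i : I, ItemOccursIn (projDB (α ++ β) DB) i → ItemOccursIn (projDB α DB) i) ∧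
    ((∀ S ∈ DB, ∀ e ∈ S, 0 ≤ e.2) →
      ∀ i : I, Phat (projDB (α ++ β) DB) i ≤ Phat (projDB α DB) i) ∧
    (∀ w : I → ℝ, (∀ x : I, w x ∈ Set.Icc (0 : ℝ) 1) →
      mxWDB w (projDB (α ++ β) DB) ≤ mxWDB w (projDB α DB)) := by
  have hsub : (projDB (α ++ β) DB).flatten ⊆ (projDB α DB).flatten := by
    rw [projDB_append]
    exact flatten_projDB_subset β _
  refine ⟨fun i => ItemOccursIn.of_flatten_subset hsub, fun hpos => ?_,
    fun w hw => mxWDB_le_of_flatten_subset hsub fun x => (hw x).1⟩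
  have hnonneg : ∀ e ∈ (projDB α DB).flatten, 0 ≤ e.2 := fun e he => by
    obtain ⟨S, hS, heS⟩ := List.mem_flatten.mp (flatten_projDB_subset α DB he)
    exact hpos S hS e heS
  exact Phat_le_of_flatten_subset hsub hnonneg
end

section
/- (Lemma 3 of the paper.) Let DB be an uncertain database, with each item x carrying a weight w(x) ∈ [0,1]. Let α be a nonempty pattern and α' = α ++ β, where β is a (possibly empty) pattern each of whose items occurs in some sequence of the projected database DB|α. Then sWeight(α') ≤ wgt^cap(α); that is, the value wgt^cap(α) is greater than or equal to the sWeight value of α and of all such super patterns of α. -/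
/-!
An average is bounded by any bound on its terms, so it suffices to bound the weight of each item
of `α ++ β`. Items of `α` are covered by `mxW_s(α)`. Greedy projection along `α = α_{m-1} ++ [i_m]`
factors through `DB|α_{m-1}`, and projecting only shrinks a sequence to a sublist, so each item
occurring in `DB|α` already occurs in `DB|α_{m-1}` and is covered by `mxW_DB(DB|α_{m-1})`.
-/

variable {I : Type*}

section Projection

variable [DecidableEq I]

theorem projSeq_sublist : ∀ {γ : List I} {S S' : USeq I},
    projSeq γ S = some S' → S'.Sublist S
  | [], _, _, h => by
    rw [projSeq, Option.some.injEq] at h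
    exact h ▸ List.Sublist.refl _
  | _ :: _, [], _, h => nomatch h
  | _ :: _, (_, _) :: _, _, h => by
    unfold projSeq at h
    split_ifs at h
    · exact (projSeq_sublist h).cons _
    · exact (projSeq_sublist h).cons _

theorem projSeq_append_s12 : ∀ {γ δ : List I} {S S' : USeq I}, projSeq (γ ++ δ) S = some S' →
    ∃ T, projSeq γ S = some T ∧ projSeq δ T = some S'
  | [], _, S, _, h => ⟨S, by rw [projSeq], h⟩
  | _ :: _, _, [], _, h => nomatch h
  | i :: γ, _, (_, _) :: _, _, h => by
    simp only [List.cons_append, projSeq] at h ⊢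
    split_ifs at h ⊢
    · exact projSeq_append_s12 h
    · exact projSeq_append_s12 (γ := i :: γ) h

theorem ItemOccursIn.of_projDB_append {DB : UDB I} {γ δ : List I} {i : I}
    (h : ItemOccursIn (projDB (γ ++ δ) DB) i) : ItemOccursIn (projDB γ DB) i := by
  obtain ⟨S', hS', hi⟩ := h
  obtain ⟨S, hS, hproj⟩ := List.mem_filterMap.1 hS'
  obtain ⟨T, hT, hTS'⟩ := projSeq_append_s12 hproj
  exact ⟨T, List.mem_filterMap.2 ⟨S, hS, hT⟩, ((projSeq_sublist hTS').map _).subset hi⟩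

end Projection

theorem le_mxWs (w : I → ℝ) {α : List I} {i : I} (h : i ∈ α) : w i ≤ mxWs w α :=
  WithBot.le_unbotD (List.le_maximum_of_mem' (List.mem_map_of_mem h))

theorem ItemOccursIn.le_mxWDB (w : I → ℝ) {D : UDB I} {i : I} (h : ItemOccursIn D i) :
    w i ≤ mxWDB w D := by
  obtain ⟨S, hS, hi⟩ := h
  obtain ⟨e, he, rfl⟩ := List.mem_map.1 hi
  exact WithBot.le_unbotD
    (List.le_maximum_of_mem' (List.mem_map_of_mem (List.mem_flatten_of_mem hS he)))

theorem sWeight_le_of_forall_le (w : I → ℝ) {α : List I} (hα : α ≠ []) {M : ℝ}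
    (h : ∀ i ∈ α, w i ≤ M) : sWeight w α ≤ M := by
  have hlen : (0 : ℝ) < α.length := by exact_mod_cast List.length_pos_iff.2 hα
  rw [sWeight, div_le_iff₀ hlen, mul_comm]
  simpa using List.sum_le_card_nsmul (α.map w) M (by simpa using h)

theorem sWeight_le_wgtCap_general [DecidableEq I]
    (DB : UDB I) (w : I → ℝ)
    (α β : List I) (hα : α ≠ [])
    (hβocc : ∀ i ∈ β, ItemOccursIn (projDB α DB) i) :
    sWeight w (α ++ β) ≤ wgtCap DB w α := by
  refine sWeight_le_of_forall_le w (List.append_ne_nil_of_left_ne_nil hα _) fun i hi => ?_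
  rcases List.mem_append.1 hi with hiα | hiβ
  · exact (le_mxWs w hiα).trans (le_max_right _ _)
  · have hocc : ItemOccursIn (projDB (α.dropLast ++ [α.getLast hα]) DB) i := by
      rw [List.dropLast_append_getLast hα]
      exact hβocc i hiβ
    exact (hocc.of_projDB_append.le_mxWDB w).trans (le_max_left _ _)

/-- Lemma 3: if all weights lie in `[0,1]`, `α` is nonempty and every item of the
(possibly empty) pattern `β` occurs in some sequence of `DB|α`, then
`sWeight(α ++ β) ≤ wgt^cap(α)`. -/
theorem sWeight_le_wgtCap [DecidableEq I]
    (DB : UDB I) (w : I → ℝ) (hw : ∀ x : I, w x ∈ Set.Icc (0 : ℝ) 1)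
    (α β : List I) (hα : α ≠ [])
    (hβocc : ∀ i ∈ β, ItemOccursIn (projDB α DB) i) :
    sWeight w (α ++ β) ≤ wgtCap DB w α :=
  sWeight_le_wgtCap_general DB w α β hα hβocc
end
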